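/- arXiv:2203.10410 — 2 statements merged into one kernel-verified Lean document; each statement's English description precedes it below -/
import Mathlib

section
/- If ε ∈ L(Q), then removing a τ redo child of a loop that also has redo child Q preserves language: L(⟲(M, R₁,…,Rₙ, Q, τ)) = L(⟲(M, R₁,…,Rₙ, Q)). -/
/-- Process trees: τ leaf, activity leaf, and nodes for the operators
×, →, ∧ (shuffle), ↔ (interleaved), ∨ (inclusive choice) and ⟲ (loop). -/
inductive PT (σ : Type) where
  | tau  : PT σ
  | act  : σ → PT σ
  | xor  : List (PT σ) → PT σ
  | seq  : List (PT σ) → PT σ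
  | par  : List (PT σ) → PT σ
  | int  : List (PT σ) → PT σ
  | ror  : List (PT σ) → PT σ
  | loop : List (PT σ) → PT σ

variable {σ : Type}

/-- `Shuffles s t u`: `u` is an interleaving of `s` and `t`. -/
inductive Shuffles : List σ → List σ → List σ → Prop where
  | nil : Shuffles [] [] []
  | left {a : σ} {s t u} : Shuffles s t u → Shuffles (a :: s) t (a :: u)
  | right {a : σ} {s t u} : Shuffles s t u → Shuffles s (a :: t) (a :: u)

/-- Shuffle of two trace languages. -/
def shuffleL (L₁ L₂ : Language σ) : Language σ :=
  {u | ∃ s ∈ L₁, ∃ t ∈ L₂, Shuffles s t u}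

/-- Union of a list of languages. -/
def xorL (Ls : List (Language σ)) : Language σ := Ls.foldr (· + ·) 0

/-- Concatenation of a list of languages. -/
def seqL (Ls : List (Language σ)) : Language σ := Ls.foldr (· * ·) 1

/-- Shuffle of a list of languages. -/
def parL (Ls : List (Language σ)) : Language σ := Ls.foldr shuffleL 1

/-- Interleaved composition: union over all permutations of the
sequential composition. -/
def intL (Ls : List (Language σ)) : Language σ :=
  {w | ∃ p ∈ Ls.permutations, w ∈ seqL p}

/-- Inclusive choice: union over all nonempty subsets of the shuffle. -/
def orL (Ls : List (Language σ)) : Language σ :=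
  {w | ∃ s ∈ Ls.sublists, s ≠ [] ∧ w ∈ parL s}

/-- Loop: `body · (redo · body)∗`. -/
def loopL : List (Language σ) → Language σ
  | [] => 0
  | body :: redos => body * KStar.kstar (xorL redos * body)

/-- The language of a process tree. -/
def lang : PT σ → Language σ
  | .tau => 1
  | .act a => {[a]}
  | .xor Ms => xorL (Ms.attach.map fun x => lang x.1)
  | .seq Ms => seqL (Ms.attach.map fun x => lang x.1)
  | .par Ms => parL (Ms.attach.map fun x => lang x.1)
  | .int Ms => intL (Ms.attach.map fun x => lang x.1)
  | .ror Ms => orL (Ms.attach.map fun x => lang x.1)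
  | .loop Ms => loopL (Ms.attach.map fun x => lang x.1)
decreasing_by all_goals (have := List.sizeOf_lt_of_mem x.2; simp; omega)


lemma lang_loop_eq {σ : Type} (Ms : List (PT σ)) :
    lang (PT.loop Ms) = loopL (Ms.map lang) := by
  rw [lang]
  rw [List.attach_map_val (l := Ms) (f := lang)]

lemma xorL_append {σ : Type} (L1 L2 : List (Language σ)) :
    xorL (L1 ++ L2) = xorL L1 + xorL L2 := by
  induction L1 with
  | nil => simp [xorL]
  | cons a l ih => simp [xorL] at ih ⊢; rw [ih, add_assoc]

/-- If ε ∈ L(Q), removing a τ redo child of a loop that also has redo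
child Q preserves the language. -/
theorem tau_loop_redo {σ : Type} (M : PT σ) (Rs : List (PT σ)) (Q : PT σ)
    (hQ : [] ∈ lang Q) :
    lang (PT.loop (M :: (Rs ++ [Q, PT.tau]))) =
      lang (PT.loop (M :: (Rs ++ [Q]))) := by
  rw [lang_loop_eq, lang_loop_eq]
  simp only [List.map_cons, List.map_append, loopL]
  congr 2
  rw [xorL_append, xorL_append]
  have h1 : (1 : Language σ) ≤ lang Q := by
    intro w hw; have hw : w ∈ (1 : Language σ) := hw; rw [Language.mem_one] at hw; subst hw; exact hQ
  have ht : lang (PT.tau : PT σ) = 1 := by rw [lang]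
  have h2 : xorL [lang Q, lang (PT.tau : PT σ)] = xorL [lang Q] := by
    simp only [xorL, List.foldr, ht, add_zero]
    exact sup_eq_left.mpr h1
  simp only [List.map_cons, List.map_nil] at h2 ⊢
  rw [h2]
end

section
/- If ε ∈ L(Q₁) and ε ∈ L(Q₂), then shuffling with both equals shuffling with their inclusive choice: L(∧(M₁,…,Mₙ, Q₁, Q₂)) = L(∧(M₁,…,Mₙ, ∨(Q₁, Q₂))). -/
variable {σ : Type}

lemma shuffles_nil_right : ∀ {s u : List σ}, Shuffles s [] u → u = s := by
  intro s u h
  generalize ht : ([] : List σ) = t at h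
  induction h with
  | nil => rfl
  | left _ ih => simp [ih ht]
  | right _ _ => cases ht

lemma shuffles_self_nil : ∀ (s : List σ), Shuffles s [] s := by
  intro s; induction s with
  | nil => exact .nil
  | cons a s ih => exact .left ih

lemma shuffles_nil_self : ∀ (s : List σ), Shuffles [] s s := by
  intro s; induction s with
  | nil => exact .nil
  | cons a s ih => exact .right ih

lemma shuffleL_one (L : Language σ) : shuffleL L 1 = L := by
  ext u
  constructor
  · rintro ⟨s, hs, t, ht, hsh⟩
    rw [Language.mem_one] at ht
    subst ht
    rwa [shuffles_nil_right hsh]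
  · intro hu
    exact ⟨u, hu, [], Language.mem_one _ |>.mpr rfl, shuffles_self_nil u⟩

lemma lang_par (l : List (PT σ)) : lang (PT.par l) = parL (l.map lang) := by
  rw [lang]
  simp

lemma lang_ror (l : List (PT σ)) : lang (PT.ror l) = orL (l.map lang) := by
  rw [lang]
  simp

lemma orL_pair (L₁ L₂ : Language σ) (h₁ : [] ∈ L₁) (h₂ : [] ∈ L₂) :
    orL [L₁, L₂] = shuffleL L₁ L₂ := by
  ext u
  constructor
  · rintro ⟨s, hs, hne, hu⟩
    simp [List.sublists] at hs
    rcases hs with h | h | h | h <;> subst h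
    · exact absurd rfl hne
    · exact ⟨u, (shuffleL_one L₁ ▸ hu), [], h₂, shuffles_self_nil u⟩
    · exact ⟨[], h₁, u, (shuffleL_one L₂ ▸ hu), shuffles_nil_self u⟩
    · simpa [parL, shuffleL_one] using hu
  · intro hu
    refine ⟨[L₁, L₂], ?_, by simp, ?_⟩
    · simp [List.sublists]
    · simpa [parL, shuffleL_one] using hu

/-- If ε ∈ L(Q₁) and ε ∈ L(Q₂), shuffling with both equals shuffling
with their inclusive choice. -/
theorem c_or {σ : Type} (Ms : List (PT σ)) (Q₁ Q₂ : PT σ)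
    (h₁ : [] ∈ lang Q₁) (h₂ : [] ∈ lang Q₂) :
    lang (PT.par (Ms ++ [Q₁, Q₂])) = lang (PT.par (Ms ++ [PT.ror [Q₁, Q₂]])) := by
  rw [lang_par, lang_par, List.map_append, List.map_append]
  simp only [List.map_cons, List.map_nil, lang_ror]
  show parL _ = parL _
  unfold parL
  rw [List.foldr_append, List.foldr_append]
  congr 1
  show shuffleL (lang Q₁) (shuffleL (lang Q₂) 1) = shuffleL (orL [lang Q₁, lang Q₂]) 1
  rw [shuffleL_one, shuffleL_one, orL_pair _ _ h₁ h₂]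
end
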